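/- Let a, b be coprime integers with a ≥ 2. Then there exist infinitely many natural numbers X such that a·X + b is a (positive) prime number. -/

import Mathlib

theorem Int.exists_lt_mul_add_eq_prime {a b : ℤ} (ha : 0 < a) (hab : IsCoprime a b) (N : ℕ) :
    ∃ X p : ℕ, N < X ∧ p.Prime ∧ a * X + b = p := by
  lift a to ℕ using ha.le
  -- the bound makes `p - b > a * N`, so `X = (p - b) / a` exceeds `N`
  obtain ⟨p, hp_gt, hp, hp_mod⟩ :=
    Nat.forall_exists_prime_gt_and_zmodEq (a * N + b.natAbs) (by omega) hab.symm
  obtain ⟨k, hk⟩ := hp_mod.symm.dvd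
  have hk_gt : (N : ℤ) < k := by
    have : (a * N + b.natAbs : ℤ) < p := by exact_mod_cast hp_gt
    nlinarith [Int.le_natAbs (a := b)]
  exact ⟨k.toNat, p, by omega, hp, by rw [Int.toNat_of_nonneg (by omega)]; linarith⟩

theorem dirichlet_ap (a b : ℤ) (hab : IsCoprime a b) (ha : 2 ≤ a) :
    ∀ N : ℕ, ∃ X : ℕ, N < X ∧ 0 < a * X + b ∧ Prime (a * X + b) := by
  intro N
  obtain ⟨X, p, hX, hp, hXp⟩ := Int.exists_lt_mul_add_eq_prime (by omega) hab N
  exact ⟨X, hX, hXp ▸ mod_cast hp.pos, hXp ▸ Nat.prime_iff_prime_int.mp hp⟩
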